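/- arXiv:1909.09030 — 4 statements merged into one kernel-verified Lean document; each statement's English description precedes it below -/
import Mathlib

section
/- (Splinter Lemma) Let U be a universe of separations and let A = (A_1, …, A_n) be a family of nonempty subsets of U, each closed under the involution. If A splinters, then one can pick an element a_i from each A_i so that the set {a_1, …, a_n} is nested. -/
/-!
Induct on `n`. Take a nested selection `w` from `A 1, …, A n` and choose `c ∈ A 0` crossing as
few of the `w t` as possible. By the fish lemma (`IsCornerSep.nested_of_nested`), a separation
nested with two crossing separations is nested with each of their corners. Hence every `A t`
with `t ≠ 0` contains an element nested with `c`: otherwise the splinter property yields a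
corner of `c` and `w t` either in `A t`, where it is nested with `c`, or in `A 0`, where it
crosses fewer `w s` than `c` does. Restricting every `A t` to the separations nested with `c`
preserves splintering (fish lemma again), so induction gives a nested selection from these
restrictions, and `c` completes it.
-/

variable {U : Type*}

/-- `star` is an order-reversing involution: `s** = s` and `r ≤ s ↔ s* ≤ r*`. -/
def OrderReversingInvolution [Lattice U] (star : U → U) : Prop :=
  (∀ s : U, star (star s) = s) ∧ ∀ r s : U, r ≤ s ↔ star s ≤ star r

/-- Two separations are nested if they have comparable orientations. -/
def Nested [Lattice U] (star : U → U) (r s : U) : Prop :=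
  r ≤ s ∨ r ≤ star s ∨ star r ≤ s ∨ star r ≤ star s

/-- Two separations cross if they are not nested. -/
def Crosses [Lattice U] (star : U → U) (r s : U) : Prop := ¬ Nested star r s

/-- `c` is a corner separation of `r` and `s`: a join of orientations of `r`
and `s`, or the involution of such a join. -/
def IsCornerSep [Lattice U] (star : U → U) (c r s : U) : Prop :=
  ∃ r' s', (r' = r ∨ r' = star r) ∧ (s' = s ∨ s' = star s) ∧
    (c = r' ⊔ s' ∨ c = star (r' ⊔ s'))

/-- A family `A` of subsets of `U` splinters if for all `i`, `j` and every
crossing pair `a ∈ A i \ A j`, `b ∈ A j \ A i`, at least one corner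
separation of `a` and `b` lies in `A i ∪ A j`. -/
def Splinters [Lattice U] (star : U → U) {I : Type*} (A : I → Set U) : Prop :=
  ∀ i j : I, ∀ a ∈ A i, a ∉ A j → ∀ b ∈ A j, b ∉ A i → Crosses star a b →
    ∃ c, IsCornerSep star c a b ∧ c ∈ A i ∪ A j

noncomputable def crossingCount [Lattice U] (star : U → U) {ι : Type*} (w : ι → U) (c : U) : ℕ :=
  {t | Crosses star c (w t)}.ncard

section

variable [Lattice U] {star : U → U} {r s u c e : U}

theorem OrderReversingInvolution.le_star_comm (h : OrderReversingInvolution star) :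
    r ≤ star s ↔ s ≤ star r := by
  rw [h.2 r (star s), h.1]

theorem OrderReversingInvolution.star_le_comm (h : OrderReversingInvolution star) :
    star r ≤ s ↔ star s ≤ r := by
  rw [h.2 (star r) s, h.1]

theorem OrderReversingInvolution.le_star_sup (h : OrderReversingInvolution star)
    (hr : u ≤ star r) (hs : u ≤ star s) : u ≤ star (r ⊔ s) :=
  h.le_star_comm.2 (sup_le (h.le_star_comm.1 hr) (h.le_star_comm.1 hs))

theorem nested_refl (r : U) : Nested star r r :=
  Or.inl le_rfl

theorem Nested.symm (h : OrderReversingInvolution star) (hrs : Nested star r s) :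
    Nested star s r := by
  rcases hrs with hrs | hrs | hrs | hrs
  · exact Or.inr (Or.inr (Or.inr ((h.2 r s).1 hrs)))
  · exact Or.inr (Or.inl (h.le_star_comm.1 hrs))
  · exact Or.inr (Or.inr (Or.inl (h.star_le_comm.1 hrs)))
  · exact Or.inl ((h.2 s r).2 hrs)

theorem nested_star_left_iff (h : OrderReversingInvolution star) :
    Nested star (star r) s ↔ Nested star r s := by
  unfold Nested
  rw [h.1]
  tauto

theorem nested_star_right_iff (h : OrderReversingInvolution star) :
    Nested star r (star s) ↔ Nested star r s := by
  unfold Nested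
  rw [h.1]
  tauto

theorem nested_congr_left (h : OrderReversingInvolution star) {r' : U}
    (hr : r' = r ∨ r' = star r) : Nested star r' s ↔ Nested star r s := by
  rcases hr with rfl | rfl
  exacts [Iff.rfl, nested_star_left_iff h]

theorem nested_congr_right (h : OrderReversingInvolution star) {s' : U}
    (hs : s' = s ∨ s' = star s) : Nested star r s' ↔ Nested star r s := by
  rcases hs with rfl | rfl
  exacts [Iff.rfl, nested_star_right_iff h]

theorem IsCornerSep.nested_left (h : OrderReversingInvolution star)
    (hc : IsCornerSep star c r s) : Nested star r c := by
  obtain ⟨r', s', hr, -, hc⟩ := hc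
  rw [← nested_congr_left h hr, nested_congr_right h hc]
  exact Or.inl le_sup_left

theorem IsCornerSep.nested_right (h : OrderReversingInvolution star)
    (hc : IsCornerSep star c r s) : Nested star s c := by
  obtain ⟨r', s', -, hs, hc⟩ := hc
  rw [← nested_congr_left h hs, nested_congr_right h hc]
  exact Or.inl le_sup_right

theorem nested_sup_of_crosses (h : OrderReversingInvolution star) (hrs : Crosses star r s)
    (hr : Nested star u r) (hs : Nested star u s) : Nested star u (r ⊔ s) := by
  rcases hr with hr | hr | hr | hr
  · exact Or.inl (hr.trans le_sup_left)
  · rcases hs with hs | hs | hs | hs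
    · exact Or.inl (hs.trans le_sup_right)
    · exact Or.inr (Or.inl (h.le_star_sup hr hs))
    · exact Or.inr (Or.inr (Or.inl (hs.trans le_sup_right)))
    · exact absurd (Or.inr (Or.inl (h.le_star_comm.2 (((h.2 s u).2 hs).trans hr)))) hrs
  · exact Or.inr (Or.inr (Or.inl (hr.trans le_sup_left)))
  · rcases hs with hs | hs | hs | hs
    · exact Or.inl (hs.trans le_sup_right)
    · exact absurd (Or.inr (Or.inl (((h.2 r u).2 hr).trans hs))) hrs
    · exact Or.inr (Or.inr (Or.inl (hs.trans le_sup_right)))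
    · exact Or.inr (Or.inr (Or.inr (h.le_star_sup hr hs)))

theorem IsCornerSep.nested_of_nested (h : OrderReversingInvolution star)
    (hc : IsCornerSep star c r s) (hrs : Crosses star r s)
    (hr : Nested star u r) (hs : Nested star u s) : Nested star u c := by
  obtain ⟨r', s', hr', hs', hc⟩ := hc
  rw [nested_congr_right h hc]
  rw [← nested_congr_right h hr'] at hr
  rw [← nested_congr_right h hs'] at hs
  refine nested_sup_of_crosses h ?_ hr hs
  rwa [Crosses, nested_congr_left h hr', nested_congr_right h hs']

theorem Splinters.comp {ι κ : Type*} {A : ι → Set U} (hA : Splinters star A) (f : κ → ι) :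
    Splinters star (A ∘ f) :=
  fun i j => hA (f i) (f j)

theorem Splinters.inter_nested (h : OrderReversingInvolution star) {ι : Type*}
    {A : ι → Set U} (hA : Splinters star A) (c : U) :
    Splinters star fun i => A i ∩ {u | Nested star u c} := by
  rintro i j a ⟨ha, hac⟩ haj b ⟨hb, hbc⟩ hbi hab
  obtain ⟨e, he, hei⟩ :=
    hA i j a ha (fun ha' => haj ⟨ha', hac⟩) b hb (fun hb' => hbi ⟨hb', hbc⟩) hab
  have hec : Nested star e c := (he.nested_of_nested h hab (hac.symm h) (hbc.symm h)).symm h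
  exact ⟨e, he, hei.imp (⟨·, hec⟩) (⟨·, hec⟩)⟩

section crossingCount

variable {ι : Type*} [Finite ι] {w : ι → U}

theorem crossingCount_eq_zero (hc : ∀ t, Nested star c (w t)) : crossingCount star w c = 0 :=
  (Set.ncard_eq_zero).2 (Set.eq_empty_of_forall_notMem fun t ht => ht (hc t))

theorem crossingCount_pos {t : ι} (hct : Crosses star c (w t)) : 0 < crossingCount star w c :=
  (Set.ncard_pos).2 ⟨t, hct⟩

theorem IsCornerSep.crossingCount_lt (h : OrderReversingInvolution star) {t : ι}
    (hw : ∀ s, Nested star (w s) (w t)) (hct : Crosses star c (w t))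
    (he : IsCornerSep star e c (w t)) : crossingCount star w e < crossingCount star w c := by
  have hsub : {s | Crosses star e (w s)} ⊆ {s | Crosses star c (w s)} := fun s hes hcs =>
    hes ((he.nested_of_nested h hct (hcs.symm h) (hw s)).symm h)
  refine Set.ncard_lt_ncard ((Set.ssubset_iff_of_subset hsub).2 ⟨t, hct, ?_⟩)
  exact fun het => het ((he.nested_right h).symm h)

end crossingCount

theorem exists_mem_nested_of_crossingCount_le (h : OrderReversingInvolution star) {n : ℕ}
    {A : Fin (n + 1) → Set U} (hA : Splinters star A) {w : Fin n → U}
    (hwA : ∀ t, w t ∈ A t.succ) (hw : ∀ s t, Nested star (w s) (w t)) (hc : c ∈ A 0)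
    (hmin : ∀ x ∈ A 0, crossingCount star w c ≤ crossingCount star w x) (t : Fin n) :
    ∃ x ∈ A t.succ, Nested star x c := by
  by_cases hwc : Nested star (w t) c
  · exact ⟨w t, hwA t, hwc⟩
  have hcw : Crosses star c (w t) := fun hcw => hwc (hcw.symm h)
  by_cases hw0 : w t ∈ A 0
  · exact absurd ((hmin _ hw0).trans_eq (crossingCount_eq_zero (hw t)))
      (crossingCount_pos hcw).not_ge
  by_cases hct : c ∈ A t.succ
  · exact ⟨c, hct, nested_refl c⟩
  obtain ⟨e, he, he0 | het⟩ := hA 0 t.succ c hc hct (w t) (hwA t) hw0 hcw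
  · exact absurd (hmin e he0) (not_le.2 (he.crossingCount_lt h (fun s => hw s t) hcw))
  · exact ⟨e, het, (he.nested_left h).symm h⟩

end

theorem splinter_lemma_general [Lattice U] (star : U → U)
    (hstar : OrderReversingInvolution star) {n : ℕ} (A : Fin n → Set U)
    (hne : ∀ i, (A i).Nonempty)
    (hsplinters : Splinters star A) :
    ∃ a : Fin n → U, (∀ i, a i ∈ A i) ∧ ∀ i j, Nested star (a i) (a j) := by
  induction n with
  | zero => exact ⟨finZeroElim, finZeroElim, finZeroElim⟩
  | succ n ih =>
    obtain ⟨w, hwA, hw⟩ := ih (A ∘ Fin.succ) (fun t => hne t.succ) (hsplinters.comp Fin.succ)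
    set c := Function.argminOn (crossingCount star w) (A 0) (hne 0)
    have hc : c ∈ A 0 := Function.argminOn_mem _ _ _
    have hmin : ∀ x ∈ A 0, crossingCount star w c ≤ crossingCount star w x :=
      fun x hx => Function.argminOn_le _ _ hx
    obtain ⟨v, hvA, hv⟩ := ih (fun t => A t.succ ∩ {u | Nested star u c})
      (exists_mem_nested_of_crossingCount_le hstar hsplinters hwA hw hc hmin)
      ((hsplinters.comp Fin.succ).inter_nested hstar c)
    refine ⟨Fin.cons c v, Fin.cases hc fun t => (hvA t).1, fun i j => ?_⟩
    cases i using Fin.cases <;> cases j using Fin.cases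
    · exact nested_refl c
    · exact (hvA _).2.symm hstar
    · exact (hvA _).2
    · exact hv _ _

/-- **Splinter Lemma.** -/
theorem splinter_lemma [Lattice U] [Fintype U] (star : U → U)
    (hstar : OrderReversingInvolution star) {n : ℕ} (A : Fin n → Set U)
    (hne : ∀ i, (A i).Nonempty)
    (hclosed : ∀ i, ∀ a ∈ A i, star a ∈ A i)
    (hsplinters : Splinters star A) :
    ∃ a : Fin n → U, (∀ i, a i ∈ A i) ∧ ∀ i j, Nested star (a i) (a j) :=
  splinter_lemma_general star hstar A hne hsplinters
end

section
/- Every finite graph G has a nested set N of separations that efficiently distinguishes its maximal tangles: for every two distinct maximal tangles P, P' of G there is a separation in N that distinguishes P and P' and has minimum order among all separations of G distinguishing P and P'. (Equivalently, every finite graph has a tree-decomposition displaying its maximal tangles.) -/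
/-!
Robertson–Seymour: every finite graph has a nested set of separations
efficiently distinguishing its maximal tangles (equivalently, a
tree-decomposition displaying its maximal tangles).
-/

variable {V : Type*} [Fintype V] [DecidableEq V]

/-- An oriented separation-candidate of a graph on `V`: a pair of vertex sets. -/
abbrev GSep (V : Type*) := Finset V × Finset V

/-- The involution `(A,B) ↦ (B,A)`. -/
def sepInv (p : GSep V) : GSep V := (p.2, p.1)

/-- The partial order `(A,B) ≤ (C,D)` iff `A ⊆ C` and `B ⊇ D`. -/
def sepLE (p q : GSep V) : Prop := p.1 ⊆ q.1 ∧ q.2 ⊆ p.2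

/-- Strict version of `sepLE`. -/
def sepLT (p q : GSep V) : Prop := sepLE p q ∧ p ≠ q

/-- The join `(A,B) ∨ (C,D) = (A ∪ C, B ∩ D)`. -/
def sepJoin (p q : GSep V) : GSep V := (p.1 ∪ q.1, p.2 ∩ q.2)

/-- The meet `(A,B) ∧ (C,D) = (A ∩ C, B ∪ D)`. -/
def sepMeet (p q : GSep V) : GSep V := (p.1 ∩ q.1, p.2 ∪ q.2)

/-- The order `|(A,B)| = |A ∩ B|`. -/
def sepOrder (p : GSep V) : ℕ := (p.1 ∩ p.2).card

/-- `(A,B)` is a separation of `G`: `A ∪ B = V` and `G` has no edge between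
`A \ B` and `B \ A`. -/
def IsSep (G : SimpleGraph V) (p : GSep V) : Prop :=
  p.1 ∪ p.2 = Finset.univ ∧
    ∀ a b : V, G.Adj a b → a ∈ p.1 → a ∉ p.2 → b ∈ p.2 → b ∉ p.1 → False

/-- Two separations are nested if they have `sepLE`-comparable orientations. -/
def sepNested (p q : GSep V) : Prop :=
  sepLE p q ∨ sepLE p (sepInv q) ∨ sepLE (sepInv p) q ∨ sepLE (sepInv p) (sepInv q)

/-- `c` is a corner separation of `p` and `q`: a join of orientations of `p`
and `q`, or the involution of such a join. -/
def sepIsCorner (c p q : GSep V) : Prop :=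
  ∃ p' q', (p' = p ∨ p' = sepInv p) ∧ (q' = q ∨ q' = sepInv q) ∧
    (c = sepJoin p' q' ∨ c = sepInv (sepJoin p' q'))

/-- For three members `(A₁,B₁), (A₂,B₂), (A₃,B₃)` of a tangle there must be a
vertex or an edge of `G` not contained in any of the induced subgraphs
`G[Aᵢ]`: this expresses `G[A₁] ∪ G[A₂] ∪ G[A₃] ≠ G`. -/
def TangleAvoids (G : SimpleGraph V) (p₁ p₂ p₃ : GSep V) : Prop :=
  (∃ v : V, v ∉ p₁.1 ∧ v ∉ p₂.1 ∧ v ∉ p₃.1) ∨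
  (∃ x y : V, G.Adj x y ∧ ¬(x ∈ p₁.1 ∧ y ∈ p₁.1) ∧
    ¬(x ∈ p₂.1 ∧ y ∈ p₂.1) ∧ ¬(x ∈ p₃.1 ∧ y ∈ p₃.1))

/-- A `k`-tangle of `G`: an orientation of all separations of order `< k`
satisfying the tangle property (T). -/
def IsTangle (G : SimpleGraph V) (k : ℕ) (τ : Set (GSep V)) : Prop :=
  (∀ p ∈ τ, IsSep G p ∧ sepOrder p < k) ∧
  (∀ p : GSep V, IsSep G p → sepOrder p < k →
    (p ∈ τ ∨ sepInv p ∈ τ) ∧ (p ∈ τ → sepInv p ∈ τ → p = sepInv p)) ∧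
  (∀ p₁ ∈ τ, ∀ p₂ ∈ τ, ∀ p₃ ∈ τ, TangleAvoids G p₁ p₂ p₃)

/-- A maximal tangle of `G`: a `k`-tangle, for some `k`, that is not properly
contained in any other tangle (equivalently, not a subset of an `l`-tangle for
any `l > k`). -/
def IsMaximalTangle (G : SimpleGraph V) (τ : Set (GSep V)) : Prop :=
  (∃ k, IsTangle G k τ) ∧ ∀ τ' : Set (GSep V), (∃ l, IsTangle G l τ') →
    τ ⊆ τ' → τ' = τ

/-- `p` distinguishes the tangles `τ` and `τ'`. -/
def sepDistinguishes (p : GSep V) (τ τ' : Set (GSep V)) : Prop :=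
  (p ∈ τ ∧ sepInv p ∈ τ') ∨ (sepInv p ∈ τ ∧ p ∈ τ')

/-- `p` distinguishes `τ` and `τ'` efficiently: it does so and has minimum
order among all separations of `G` distinguishing `τ` and `τ'`. -/
def sepEffDist (G : SimpleGraph V) (p : GSep V) (τ τ' : Set (GSep V)) : Prop :=
  IsSep G p ∧ sepDistinguishes p τ τ' ∧
    ∀ q : GSep V, IsSep G q → sepDistinguishes q τ τ' → sepOrder p ≤ sepOrder q

/-!
Take a maximal nested set `N` of separations each of which efficiently distinguishes some pair of
tangles. If two distinct maximal tangles `τ₁, τ₂` were not efficiently distinguished by `N`, choose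
an efficient `τ₁`–`τ₂` distinguisher `p` crossing as few members of `N` as possible. If `p` crosses
`q ∈ N`, submodularity of the order, played against the efficiency of `p` and of `q`, yields a
corner `r` of `p` and `q` that still distinguishes `τ₁, τ₂` efficiently. Now `r` is nested with `q`
and, by the fish lemma, with every separation nested with both `p` and `q`, so `r` crosses fewer
members of `N` than `p`. Hence `p` is nested with all of `N` and could be added to it.
-/

section Separations

variable {G : SimpleGraph V} {p q r t : GSep V}

omit [Fintype V] [DecidableEq V] in
@[simp] lemma sepInv_sepInv (p : GSep V) : sepInv (sepInv p) = p := rfl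

omit [Fintype V] [DecidableEq V] in
lemma sepLE_trans (h₁ : sepLE p q) (h₂ : sepLE q r) : sepLE p r :=
  ⟨h₁.1.trans h₂.1, h₂.2.trans h₁.2⟩

omit [Fintype V] [DecidableEq V] in
lemma sepLE_sepInv (h : sepLE p q) : sepLE (sepInv q) (sepInv p) := ⟨h.2, h.1⟩

omit [Fintype V] in
lemma le_sepJoin_left (p q : GSep V) : sepLE p (sepJoin p q) :=
  ⟨Finset.subset_union_left, Finset.inter_subset_left⟩

omit [Fintype V] in
lemma le_sepJoin_right (p q : GSep V) : sepLE q (sepJoin p q) :=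
  ⟨Finset.subset_union_right, Finset.inter_subset_right⟩

omit [Fintype V] in
lemma le_sepInv_sepJoin (hp : sepLE t (sepInv p)) (hq : sepLE t (sepInv q)) :
    sepLE t (sepInv (sepJoin p q)) :=
  ⟨Finset.subset_inter hp.1 hq.1, Finset.union_subset hp.2 hq.2⟩

omit [Fintype V] in
lemma sepJoin_comm (p q : GSep V) : sepJoin p q = sepJoin q p := by
  simp [sepJoin, Finset.union_comm, Finset.inter_comm]

omit [Fintype V] in
@[simp] lemma sepOrder_sepInv (p : GSep V) : sepOrder (sepInv p) = sepOrder p := by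
  simp [sepOrder, sepInv, Finset.inter_comm]

omit [Fintype V] in
lemma sepOrder_sepJoin_add_le (p q : GSep V) :
    sepOrder (sepJoin p q) + sepOrder (sepJoin (sepInv p) (sepInv q)) ≤
      sepOrder p + sepOrder q := by
  set X := (p.1 ∪ q.1) ∩ (p.2 ∩ q.2)
  set Y := (p.2 ∪ q.2) ∩ (p.1 ∩ q.1)
  have hunion : X ∪ Y ⊆ (p.1 ∩ p.2) ∪ (q.1 ∩ q.2) := by
    intro v
    simp only [X, Y, Finset.mem_union, Finset.mem_inter]
    tauto
  have hinter : X ∩ Y ⊆ (p.1 ∩ p.2) ∩ (q.1 ∩ q.2) := by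
    intro v
    simp only [X, Y, Finset.mem_union, Finset.mem_inter]
    tauto
  calc X.card + Y.card = (X ∪ Y).card + (X ∩ Y).card := (Finset.card_union_add_card_inter X Y).symm
    _ ≤ ((p.1 ∩ p.2) ∪ (q.1 ∩ q.2)).card + ((p.1 ∩ p.2) ∩ (q.1 ∩ q.2)).card :=
      Nat.add_le_add (Finset.card_le_card hunion) (Finset.card_le_card hinter)
    _ = sepOrder p + sepOrder q := Finset.card_union_add_card_inter _ _

lemma IsSep.sepInv (h : IsSep G p) : IsSep G (sepInv p) :=
  ⟨by rw [_root_.sepInv, Finset.union_comm]; exact h.1,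
    fun a b hab ha₁ ha₂ hb₁ hb₂ => h.2 b a hab.symm hb₁ hb₂ ha₁ ha₂⟩

lemma IsSep.mem_or_mem (h : IsSep G p) (v : V) : v ∈ p.1 ∨ v ∈ p.2 :=
  Finset.mem_union.mp (h.1 ▸ Finset.mem_univ v)

lemma IsSep.adj_mem (h : IsSep G p) {x y : V} (hxy : G.Adj x y) :
    (x ∈ p.1 ∧ y ∈ p.1) ∨ (x ∈ p.2 ∧ y ∈ p.2) := by
  have := h.2 x y hxy
  have := h.2 y x hxy.symm
  have := h.mem_or_mem x
  have := h.mem_or_mem y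
  tauto

lemma IsSep.sepJoin (hp : IsSep G p) (hq : IsSep G q) : IsSep G (sepJoin p q) := by
  refine ⟨Finset.eq_univ_of_forall fun v => ?_, fun a b hab ha₁ ha₂ hb₁ hb₂ => ?_⟩
  · have := hp.mem_or_mem v
    have := hq.mem_or_mem v
    simp only [_root_.sepJoin, Finset.mem_union, Finset.mem_inter]
    tauto
  · have := hp.adj_mem hab
    have := hq.adj_mem hab
    simp only [_root_.sepJoin, Finset.mem_union, Finset.mem_inter] at ha₁ ha₂ hb₁ hb₂
    tauto

end Separations

section Nestedness

variable {p q t c : GSep V}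

omit [Fintype V] [DecidableEq V] in
lemma sepNested_refl (p : GSep V) : sepNested p p := Or.inl ⟨subset_rfl, subset_rfl⟩

omit [Fintype V] [DecidableEq V] in
lemma sepNested_comm : sepNested p q ↔ sepNested q p := by
  unfold sepNested
  constructor <;> rintro (h | h | h | h) <;> have := sepLE_sepInv h <;> tauto

omit [Fintype V] [DecidableEq V] in
@[simp] lemma sepNested_sepInv_left : sepNested (sepInv p) q ↔ sepNested p q := by
  unfold sepNested
  tauto

omit [Fintype V] [DecidableEq V] in
@[simp] lemma sepNested_sepInv_right : sepNested p (sepInv q) ↔ sepNested p q := by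
  unfold sepNested
  tauto

omit [Fintype V] in
lemma sepNested_sepJoin_right (p q : GSep V) : sepNested (sepJoin p q) q :=
  Or.inr (Or.inr (Or.inr (sepLE_sepInv (le_sepJoin_right p q))))

omit [Fintype V] in
lemma sepNested_sepJoin (hp : sepNested t p) (hq : sepNested t q) (hpq : ¬ sepNested p q) :
    sepNested t (sepJoin p q) := by
  rcases hp with h | h | h | h
  · exact Or.inl (sepLE_trans h (le_sepJoin_left p q))
  · rcases hq with h' | h' | h' | h'
    · exact Or.inl (sepLE_trans h' (le_sepJoin_right p q))
    · exact Or.inr (Or.inl (le_sepInv_sepJoin h h'))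
    · exact Or.inr (Or.inr (Or.inl (sepLE_trans h' (le_sepJoin_right p q))))
    · exact absurd (Or.inr (Or.inl (sepLE_sepInv (sepLE_trans (sepLE_sepInv h') h)))) hpq
  · exact Or.inr (Or.inr (Or.inl (sepLE_trans h (le_sepJoin_left p q))))
  · rcases hq with h' | h' | h' | h'
    · exact Or.inl (sepLE_trans h' (le_sepJoin_right p q))
    · exact absurd (Or.inr (Or.inl (sepLE_trans (sepLE_sepInv h) h'))) hpq
    · exact Or.inr (Or.inr (Or.inl (sepLE_trans h' (le_sepJoin_right p q))))
    · exact Or.inr (Or.inr (Or.inr (le_sepInv_sepJoin h h')))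

omit [Fintype V] in
lemma sepNested_of_sepIsCorner_right (hc : sepIsCorner c p q) : sepNested c q := by
  obtain ⟨p', q', -, hq', hc⟩ := hc
  have : sepNested c q' := by
    rcases hc with rfl | rfl
    · exact sepNested_sepJoin_right p' q'
    · exact sepNested_sepInv_left.mpr (sepNested_sepJoin_right p' q')
  rcases hq' with rfl | rfl
  · exact this
  · exact sepNested_sepInv_right.mp this

omit [Fintype V] in
lemma sepNested_of_sepIsCorner (hc : sepIsCorner c p q) (hpq : ¬ sepNested p q)
    (hp : sepNested t p) (hq : sepNested t q) : sepNested t c := by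
  obtain ⟨p', q', hp', hq', hc⟩ := hc
  suffices h : sepNested t (sepJoin p' q') by rcases hc with rfl | rfl <;> simpa using h
  rcases hp' with rfl | rfl <;> rcases hq' with rfl | rfl <;>
    exact sepNested_sepJoin (by simpa using hp) (by simpa using hq) (by simpa using hpq)

end Nestedness

section Tangles

variable {G : SimpleGraph V} {p q ρ : GSep V} {τ : Set (GSep V)} {k : ℕ}

omit [Fintype V] [DecidableEq V] in
lemma not_tangleAvoids_of_cover {p₁ p₂ p₃ : GSep V}
    (hv : ∀ v, v ∈ p₁.1 ∨ v ∈ p₂.1 ∨ v ∈ p₃.1)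
    (he : ∀ x y, G.Adj x y →
      (x ∈ p₁.1 ∧ y ∈ p₁.1) ∨ (x ∈ p₂.1 ∧ y ∈ p₂.1) ∨ (x ∈ p₃.1 ∧ y ∈ p₃.1)) :
    ¬ TangleAvoids G p₁ p₂ p₃ := by
  rintro (⟨v, h₁, h₂, h₃⟩ | ⟨x, y, hxy, h₁, h₂, h₃⟩)
  · rcases hv v with h | h | h <;> contradiction
  · rcases he x y hxy with h | h | h <;> contradiction

lemma IsTangle.isSep (hτ : IsTangle G k τ) (hp : p ∈ τ) : IsSep G p := (hτ.1 p hp).1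

lemma IsTangle.sepOrder_lt (hτ : IsTangle G k τ) (hp : p ∈ τ) : sepOrder p < k := (hτ.1 p hp).2

lemma IsTangle.mem_or_sepInv_mem (hτ : IsTangle G k τ) (hp : IsSep G p) (hk : sepOrder p < k) :
    p ∈ τ ∨ sepInv p ∈ τ :=
  (hτ.2.1 p hp hk).1

lemma IsTangle.mem_of_le (hτ : IsTangle G k τ) (hq : q ∈ τ) (hp : IsSep G p) (hpq : sepLE p q)
    (hord : sepOrder p ≤ sepOrder q) : p ∈ τ := by
  refine (hτ.mem_or_sepInv_mem hp (hord.trans_lt (hτ.sepOrder_lt hq))).resolve_right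
    fun hp' => not_tangleAvoids_of_cover (fun v => ?_) (fun x y hxy => ?_) (hτ.2.2 _ hq _ hp' _ hp')
  · rcases (hτ.isSep hq).mem_or_mem v with h | h
    · exact Or.inl h
    · exact Or.inr (Or.inl (hpq.2 h))
  · rcases (hτ.isSep hq).adj_mem hxy with h | h
    · exact Or.inl h
    · exact Or.inr (Or.inl ⟨hpq.2 h.1, hpq.2 h.2⟩)

lemma IsTangle.sepJoin_mem (hτ : IsTangle G k τ) (hp : p ∈ τ) (hq : q ∈ τ)
    (hord : sepOrder (sepJoin p q) < k) : sepJoin p q ∈ τ := by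
  have hsp := hτ.isSep hp
  have hsq := hτ.isSep hq
  refine (hτ.mem_or_sepInv_mem (hsp.sepJoin hsq) hord).resolve_right fun hpq =>
    not_tangleAvoids_of_cover (fun v => ?_) (fun x y hxy => ?_) (hτ.2.2 _ hp _ hq _ hpq)
  · have := hsp.mem_or_mem v
    have := hsq.mem_or_mem v
    simp only [sepInv, sepJoin, Finset.mem_inter]
    tauto
  · have := hsp.adj_mem hxy
    have := hsq.adj_mem hxy
    simp only [sepInv, sepJoin, Finset.mem_inter]
    tauto

lemma IsTangle.sepJoin_mem_or_sepJoin_sepInv_mem (hτ : IsTangle G k τ) (hρ : ρ ∈ τ)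
    (hq : IsSep G q) (h₁ : sepOrder (sepJoin ρ q) < k)
    (h₂ : sepOrder (sepJoin ρ (sepInv q)) < k) :
    sepJoin ρ q ∈ τ ∨ sepJoin ρ (sepInv q) ∈ τ := by
  have hsρ := hτ.isSep hρ
  refine (hτ.mem_or_sepInv_mem (hsρ.sepJoin hq) h₁).imp_right fun hc₁ =>
    (hτ.mem_or_sepInv_mem (hsρ.sepJoin hq.sepInv) h₂).resolve_right fun hc₂ =>
      not_tangleAvoids_of_cover (fun v => ?_) (fun x y hxy => ?_) (hτ.2.2 _ hρ _ hc₁ _ hc₂)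
  · have := hsρ.mem_or_mem v
    have := hq.mem_or_mem v
    simp only [sepInv, sepJoin, Finset.mem_inter]
    tauto
  · have := hsρ.adj_mem hxy
    have := hq.adj_mem hxy
    simp only [sepInv, sepJoin, Finset.mem_inter]
    tauto

end Tangles

section Distinguishing

variable {G : SimpleGraph V} {p q ρ : GSep V} {τ τ' τ₁ τ₂ : Set (GSep V)} {k k₁ k₂ : ℕ}

omit [Fintype V] [DecidableEq V] in
lemma sepDistinguishes_comm : sepDistinguishes p τ₁ τ₂ ↔ sepDistinguishes p τ₂ τ₁ := by
  unfold sepDistinguishes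
  tauto

omit [Fintype V] [DecidableEq V] in
@[simp] lemma sepDistinguishes_sepInv :
    sepDistinguishes (sepInv p) τ₁ τ₂ ↔ sepDistinguishes p τ₁ τ₂ := by
  unfold sepDistinguishes
  tauto

lemma sepEffDist_sepInv : sepEffDist G (sepInv p) τ₁ τ₂ ↔ sepEffDist G p τ₁ τ₂ := by
  simp only [sepEffDist, sepOrder_sepInv, sepDistinguishes_sepInv]
  exact ⟨fun ⟨h, hd, hmin⟩ => ⟨h.sepInv, hd, hmin⟩, fun ⟨h, hd, hmin⟩ => ⟨h.sepInv, hd, hmin⟩⟩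

lemma IsTangle.isSep_of_sepDistinguishes (hτ : IsTangle G k τ) (hp : sepDistinguishes p τ τ') :
    IsSep G p := by
  rcases hp with ⟨h, -⟩ | ⟨h, -⟩
  · exact hτ.isSep h
  · exact (hτ.isSep h).sepInv

lemma IsTangle.sepOrder_lt_of_sepDistinguishes (hτ : IsTangle G k τ)
    (hp : sepDistinguishes p τ τ') : sepOrder p < k := by
  rcases hp with ⟨h, -⟩ | ⟨h, -⟩
  · exact hτ.sepOrder_lt h
  · simpa using hτ.sepOrder_lt h

lemma exists_mem_mem_of_not_sepDistinguishes (hτ₁ : IsTangle G k₁ τ₁) (hτ₂ : IsTangle G k₂ τ₂)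
    (hp : IsSep G p) (h₁ : sepOrder p < k₁) (h₂ : sepOrder p < k₂)
    (hnd : ¬ sepDistinguishes p τ₁ τ₂) :
    ∃ p', (p' = p ∨ p' = sepInv p) ∧ p' ∈ τ₁ ∧ p' ∈ τ₂ := by
  unfold sepDistinguishes at hnd
  rcases hτ₁.mem_or_sepInv_mem hp h₁ with h | h <;>
    rcases hτ₂.mem_or_sepInv_mem hp h₂ with h' | h'
  exacts [⟨p, Or.inl rfl, h, h'⟩, (hnd (Or.inl ⟨h, h'⟩)).elim,
    (hnd (Or.inr ⟨h, h'⟩)).elim, ⟨sepInv p, Or.inr rfl, h, h'⟩]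

lemma sepDistinguishes_sepJoin_of_mem (hτ₁ : IsTangle G k₁ τ₁) (hτ₂ : IsTangle G k₂ τ₂)
    (hρ : sepDistinguishes ρ τ₁ τ₂) (hq₁ : q ∈ τ₁) (hq₂ : q ∈ τ₂)
    (hord : sepOrder (sepJoin ρ q) ≤ sepOrder ρ) : sepDistinguishes (sepJoin ρ q) τ₁ τ₂ := by
  have key : ∀ {σ₁ σ₂ m₁ m₂}, IsTangle G m₁ σ₁ → IsTangle G m₂ σ₂ → ρ ∈ σ₁ → sepInv ρ ∈ σ₂ →
      q ∈ σ₁ → sepJoin ρ q ∈ σ₁ ∧ sepInv (sepJoin ρ q) ∈ σ₂ := fun hσ₁ hσ₂ h₁ h₂ hq =>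
    ⟨hσ₁.sepJoin_mem h₁ hq (hord.trans_lt (hσ₁.sepOrder_lt h₁)),
      hσ₂.mem_of_le h₂ ((hσ₁.isSep h₁).sepJoin (hσ₁.isSep hq)).sepInv
        (sepLE_sepInv (le_sepJoin_left ρ q)) (by simpa using hord)⟩
  rcases hρ with ⟨h₁, h₂⟩ | ⟨h₁, h₂⟩
  · exact Or.inl (key hτ₁ hτ₂ h₁ h₂ hq₁)
  · exact Or.inr (key hτ₂ hτ₁ h₂ h₁ hq₂).symm

lemma sepDistinguishes_sepJoin_or (hτ₁ : IsTangle G k₁ τ₁) (hτ₂ : IsTangle G k₂ τ₂)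
    (hρ : sepDistinguishes ρ τ₁ τ₂) (hq : IsSep G q)
    (hord₁ : sepOrder (sepJoin ρ q) ≤ sepOrder ρ)
    (hord₂ : sepOrder (sepJoin ρ (sepInv q)) ≤ sepOrder ρ) :
    sepDistinguishes (sepJoin ρ q) τ₁ τ₂ ∨ sepDistinguishes (sepJoin ρ (sepInv q)) τ₁ τ₂ := by
  suffices key : ∀ {σ₁ σ₂ m₁ m₂}, IsTangle G m₁ σ₁ → IsTangle G m₂ σ₂ → ρ ∈ σ₁ →
      sepInv ρ ∈ σ₂ → sepDistinguishes (sepJoin ρ q) σ₁ σ₂ ∨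
        sepDistinguishes (sepJoin ρ (sepInv q)) σ₁ σ₂ by
    rcases hρ with ⟨h₁, h₂⟩ | ⟨h₁, h₂⟩
    · exact key hτ₁ hτ₂ h₁ h₂
    · simpa only [sepDistinguishes_comm (τ₁ := τ₁)] using key hτ₂ hτ₁ h₂ h₁
  intro σ₁ σ₂ m₁ m₂ hσ₁ hσ₂ h₁ h₂
  have hsρ := hσ₁.isSep h₁
  have hinv : ∀ q', IsSep G q' → sepOrder (sepJoin ρ q') ≤ sepOrder ρ →
      sepInv (sepJoin ρ q') ∈ σ₂ := fun q' hq' hord =>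
    hσ₂.mem_of_le h₂ (hsρ.sepJoin hq').sepInv (sepLE_sepInv (le_sepJoin_left ρ q'))
      (by simpa using hord)
  exact (hσ₁.sepJoin_mem_or_sepJoin_sepInv_mem h₁ hq (hord₁.trans_lt (hσ₁.sepOrder_lt h₁))
    (hord₂.trans_lt (hσ₁.sepOrder_lt h₁))).imp
    (fun h => Or.inl ⟨h, hinv q hq hord₁⟩) (fun h => Or.inl ⟨h, hinv _ hq.sepInv hord₂⟩)

end Distinguishing

section Corners

variable {G : SimpleGraph V} {p q : GSep V} {τ₁ τ₂ σ₁ σ₂ : Set (GSep V)} {k₁ k₂ m₁ m₂ : ℕ}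

/-- If both corners `p ∨ q`, `p* ∨ q` were too large, submodularity would make the two corners
`q* ∨ p`, `q* ∨ p*` smaller than `q`, and one of them would distinguish `σ₁, σ₂` more
efficiently than `q`. -/
lemma exists_sepJoin_sepDistinguishes_of_mem_mem (hτ₁ : IsTangle G k₁ τ₁)
    (hτ₂ : IsTangle G k₂ τ₂) (hσ₁ : IsTangle G m₁ σ₁) (hσ₂ : IsTangle G m₂ σ₂)
    (hp : sepDistinguishes p τ₁ τ₂) (hq : sepEffDist G q σ₁ σ₂) (hq₁ : q ∈ τ₁) (hq₂ : q ∈ τ₂) :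
    ∃ p', (p' = p ∨ p' = sepInv p) ∧ sepOrder (sepJoin p' q) ≤ sepOrder p ∧
      sepDistinguishes (sepJoin p' q) τ₁ τ₂ := by
  by_cases h₁ : sepOrder (sepJoin p q) ≤ sepOrder p
  · exact ⟨p, Or.inl rfl, h₁, sepDistinguishes_sepJoin_of_mem hτ₁ hτ₂ hp hq₁ hq₂ h₁⟩
  by_cases h₂ : sepOrder (sepJoin (sepInv p) q) ≤ sepOrder p
  · exact ⟨sepInv p, Or.inr rfl, h₂, sepDistinguishes_sepJoin_of_mem hτ₁ hτ₂
      (sepDistinguishes_sepInv.mpr hp) hq₁ hq₂ (by simpa using h₂)⟩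
  exfalso
  have hsub₁ := sepOrder_sepJoin_add_le p q
  have hsub₂ := sepOrder_sepJoin_add_le (sepInv p) q
  simp only [sepOrder_sepInv, sepInv_sepInv] at hsub₂
  obtain ⟨hsq, hqd, hqmin⟩ := hq
  rcases sepDistinguishes_sepJoin_or hσ₁ hσ₂ (sepDistinguishes_sepInv.mpr hqd)
      (hτ₁.isSep_of_sepDistinguishes hp)
      (by rw [sepJoin_comm, sepOrder_sepInv]; omega)
      (by rw [sepJoin_comm, sepOrder_sepInv]; omega) with hd | hd
  · have := hqmin _ (hsq.sepInv.sepJoin (hτ₁.isSep_of_sepDistinguishes hp)) hd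
    rw [sepJoin_comm] at this
    omega
  · have := hqmin _ (hsq.sepInv.sepJoin (hτ₁.isSep_of_sepDistinguishes hp).sepInv) hd
    rw [sepJoin_comm] at this
    omega

/-- Both corners `p ∨ q`, `p ∨ q*` are at least as large as `q`, as otherwise they would
distinguish `σ₁, σ₂`; by submodularity the opposite corners are no larger than `p`. -/
lemma exists_sepJoin_sepInv_sepDistinguishes_of_mem_mem (hτ₁ : IsTangle G k₁ τ₁)
    (hτ₂ : IsTangle G k₂ τ₂) (hσ₁ : IsTangle G m₁ σ₁) (hσ₂ : IsTangle G m₂ σ₂)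
    (hp : sepDistinguishes p τ₁ τ₂) (hq : sepEffDist G q σ₁ σ₂) (hp₁ : p ∈ σ₁) (hp₂ : p ∈ σ₂) :
    ∃ q', (q' = q ∨ q' = sepInv q) ∧ sepOrder (sepJoin (sepInv p) q') ≤ sepOrder p ∧
      sepDistinguishes (sepJoin (sepInv p) q') τ₁ τ₂ := by
  obtain ⟨hsq, hqd, hqmin⟩ := hq
  have hlarge : ∀ q', IsSep G q' → sepDistinguishes q' σ₁ σ₂ → sepOrder q' = sepOrder q →
      sepOrder q ≤ sepOrder (sepJoin p q') := by
    intro q' hsq' hq'd hq'ord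
    by_contra! hlt
    have := hqmin _ (hsq'.sepJoin (hσ₁.isSep hp₁)) (sepDistinguishes_sepJoin_of_mem hσ₁ hσ₂ hq'd
      hp₁ hp₂ (by rw [sepJoin_comm]; omega))
    rw [sepJoin_comm] at this
    omega
  have h₁ := hlarge q hsq hqd rfl
  have h₂ := hlarge (sepInv q) hsq.sepInv (by simpa using hqd) (by simp)
  have hsub₁ := sepOrder_sepJoin_add_le p q
  have hsub₂ := sepOrder_sepJoin_add_le p (sepInv q)
  simp only [sepOrder_sepInv, sepInv_sepInv] at hsub₂
  rcases sepDistinguishes_sepJoin_or hτ₁ hτ₂ (sepDistinguishes_sepInv.mpr hp) hsq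
      (by simp only [sepOrder_sepInv]; omega) (by simp only [sepOrder_sepInv]; omega) with hd | hd
  · exact ⟨q, Or.inl rfl, by omega, hd⟩
  · exact ⟨sepInv q, Or.inr rfl, by omega, hd⟩

theorem exists_sepIsCorner_sepEffDist (hτ₁ : IsTangle G k₁ τ₁) (hτ₂ : IsTangle G k₂ τ₂)
    (hσ₁ : IsTangle G m₁ σ₁) (hσ₂ : IsTangle G m₂ σ₂) (hp : sepEffDist G p τ₁ τ₂)
    (hq : sepEffDist G q σ₁ σ₂) (hqτ : ¬ sepEffDist G q τ₁ τ₂) :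
    ∃ r, sepIsCorner r p q ∧ sepEffDist G r τ₁ τ₂ := by
  obtain ⟨hsp, hpd, hpmin⟩ := hp
  suffices ∃ r, sepIsCorner r p q ∧ sepOrder r ≤ sepOrder p ∧ sepDistinguishes r τ₁ τ₂ by
    obtain ⟨r, hr, hrp, hrd⟩ := this
    exact ⟨r, hr, hτ₁.isSep_of_sepDistinguishes hrd, hrd,
      fun t ht htd => hrp.trans (hpmin t ht htd)⟩
  rcases le_or_gt (sepOrder q) (sepOrder p) with hqp | hpq
  · obtain ⟨q', hq', hq'₁, hq'₂⟩ := exists_mem_mem_of_not_sepDistinguishes hτ₁ hτ₂ hq.1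
      (hqp.trans_lt (hτ₁.sepOrder_lt_of_sepDistinguishes hpd))
      (hqp.trans_lt (hτ₂.sepOrder_lt_of_sepDistinguishes (sepDistinguishes_comm.mp hpd)))
      fun hd => hqτ ⟨hq.1, hd, fun t ht htd => hqp.trans (hpmin t ht htd)⟩
    have hq'σ : sepEffDist G q' σ₁ σ₂ := by
      rcases hq' with rfl | rfl <;> simpa [sepEffDist_sepInv] using hq
    obtain ⟨p', hp', hord, hd⟩ :=
      exists_sepJoin_sepDistinguishes_of_mem_mem hτ₁ hτ₂ hσ₁ hσ₂ hpd hq'σ hq'₁ hq'₂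
    exact ⟨_, ⟨p', q', hp', hq', Or.inl rfl⟩, hord, hd⟩
  · obtain ⟨p', hp', hp'₁, hp'₂⟩ := exists_mem_mem_of_not_sepDistinguishes hσ₁ hσ₂ hsp
      (hpq.trans (hσ₁.sepOrder_lt_of_sepDistinguishes hq.2.1))
      (hpq.trans (hσ₂.sepOrder_lt_of_sepDistinguishes (sepDistinguishes_comm.mp hq.2.1)))
      fun hd => (hq.2.2 p hsp hd).not_gt hpq
    have hp'd : sepDistinguishes p' τ₁ τ₂ := by rcases hp' with rfl | rfl <;> simpa using hpd
    have hp'ord : sepOrder p' = sepOrder p := by rcases hp' with rfl | rfl <;> simp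
    obtain ⟨q', hq', hord, hd⟩ :=
      exists_sepJoin_sepInv_sepDistinguishes_of_mem_mem hτ₁ hτ₂ hσ₁ hσ₂ hp'd hq hp'₁ hp'₂
    refine ⟨_, ⟨sepInv p', q', ?_, hq', Or.inl rfl⟩, hp'ord ▸ hord, hd⟩
    rcases hp' with rfl | rfl <;> simp

end Corners

section Extension

variable {G : SimpleGraph V} {p q r : GSep V} {τ₁ τ₂ : Set (GSep V)} {k₁ k₂ : ℕ}
  {N : Set (GSep V)}

def IsEffTangleDistinguisher (G : SimpleGraph V) (p : GSep V) : Prop :=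
  ∃ (σ₁ σ₂ : Set (GSep V)) (m₁ m₂ : ℕ), IsTangle G m₁ σ₁ ∧ IsTangle G m₂ σ₂ ∧ sepEffDist G p σ₁ σ₂

lemma IsEffTangleDistinguisher.isSep (h : IsEffTangleDistinguisher G p) : IsSep G p := by
  obtain ⟨_, _, _, _, _, _, h⟩ := h
  exact h.1

lemma exists_sepEffDist (h : ∃ p, IsSep G p ∧ sepDistinguishes p τ₁ τ₂) :
    ∃ p, sepEffDist G p τ₁ τ₂ := by
  obtain ⟨p, ⟨hp, hpd⟩, hmin⟩ := Set.exists_min_image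
    {p | IsSep G p ∧ sepDistinguishes p τ₁ τ₂} sepOrder (Set.toFinite _) h
  exact ⟨p, hp, hpd, fun q hq hqd => hmin q ⟨hq, hqd⟩⟩

lemma IsTangle.sepDistinguishes_of_mem_of_notMem (hτ₁ : IsTangle G k₁ τ₁)
    (hτ₂ : IsTangle G k₂ τ₂) (hp₁ : p ∈ τ₁) (hp₂ : p ∉ τ₂) (hk : sepOrder p < k₂) :
    sepDistinguishes p τ₁ τ₂ :=
  Or.inl ⟨hp₁, (hτ₂.mem_or_sepInv_mem (hτ₁.isSep hp₁) hk).resolve_left hp₂⟩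

lemma IsMaximalTangle.exists_sepDistinguishes (hτ₁ : IsMaximalTangle G τ₁)
    (hτ₂ : IsMaximalTangle G τ₂) (hne : τ₁ ≠ τ₂) : ∃ p, IsSep G p ∧ sepDistinguishes p τ₁ τ₂ := by
  obtain ⟨⟨k₁, h₁⟩, hmax₁⟩ := hτ₁
  obtain ⟨⟨k₂, h₂⟩, hmax₂⟩ := hτ₂
  obtain ⟨a, ha₁, ha₂⟩ : ∃ a ∈ τ₁, a ∉ τ₂ :=
    Set.not_subset.mp fun h => hne (hmax₁ τ₂ ⟨k₂, h₂⟩ h).symm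
  obtain ⟨b, hb₂, hb₁⟩ : ∃ b ∈ τ₂, b ∉ τ₁ :=
    Set.not_subset.mp fun h => hne (hmax₂ τ₁ ⟨k₁, h₁⟩ h)
  by_cases ha : sepOrder a < k₂
  · exact ⟨a, h₁.isSep ha₁, h₁.sepDistinguishes_of_mem_of_notMem h₂ ha₁ ha₂ ha⟩
  · have hb : sepOrder b < k₁ := by
      have := h₁.sepOrder_lt ha₁
      have := h₂.sepOrder_lt hb₂
      omega
    exact ⟨b, h₂.isSep hb₂,
      sepDistinguishes_comm.mp (h₂.sepDistinguishes_of_mem_of_notMem h₁ hb₂ hb₁ hb)⟩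

omit [Fintype V] in
lemma sep_not_sepNested_ssubset_of_sepIsCorner (hN : ∀ s ∈ N, ∀ t ∈ N, sepNested s t)
    (hq : q ∈ N) (hpq : ¬ sepNested p q) (hr : sepIsCorner r p q) :
    {t ∈ N | ¬ sepNested r t} ⊂ {t ∈ N | ¬ sepNested p t} := by
  refine ⟨fun t ⟨ht, hrt⟩ => ⟨ht, fun hpt => hrt (sepNested_comm.mp ?_)⟩, fun h => ?_⟩
  · exact sepNested_of_sepIsCorner hr hpq (sepNested_comm.mp hpt) (hN t ht q hq)
  · exact (h ⟨hq, hpq⟩).2 (sepNested_of_sepIsCorner_right hr)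

theorem exists_sepEffDist_forall_sepNested (hτ₁ : IsTangle G k₁ τ₁) (hτ₂ : IsTangle G k₂ τ₂)
    (hd : ∃ p, IsSep G p ∧ sepDistinguishes p τ₁ τ₂) (hN : ∀ q ∈ N, IsEffTangleDistinguisher G q)
    (hNnest : ∀ s ∈ N, ∀ t ∈ N, sepNested s t) (hNτ : ∀ q ∈ N, ¬ sepEffDist G q τ₁ τ₂) :
    ∃ p, sepEffDist G p τ₁ τ₂ ∧ ∀ q ∈ N, sepNested p q := by
  obtain ⟨p, hp, hmin⟩ := Set.exists_min_image {p | sepEffDist G p τ₁ τ₂}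
    (fun p => {t ∈ N | ¬ sepNested p t}.ncard) (Set.toFinite _) (exists_sepEffDist hd)
  refine ⟨p, hp, fun q hq => by_contra fun hpq => ?_⟩
  obtain ⟨σ₁, σ₂, m₁, m₂, hσ₁, hσ₂, hqσ⟩ := hN q hq
  obtain ⟨r, hr, hrτ⟩ := exists_sepIsCorner_sepEffDist hτ₁ hτ₂ hσ₁ hσ₂ hp hqσ (hNτ q hq)
  exact (hmin r hrτ).not_gt (Set.ncard_lt_ncard
    (sep_not_sepNested_ssubset_of_sepIsCorner hNnest hq hpq hr) (Set.toFinite _))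

end Extension

/-- **Every finite graph has a nested set of separations efficiently
distinguishing its maximal tangles.** -/
theorem graph_tree_of_tangles (G : SimpleGraph V) :
    ∃ N : Set (GSep V),
      (∀ p ∈ N, IsSep G p) ∧
      (∀ p ∈ N, ∀ q ∈ N, sepNested p q) ∧
      ∀ τ τ' : Set (GSep V), IsMaximalTangle G τ → IsMaximalTangle G τ' →
        τ ≠ τ' → ∃ p ∈ N, sepEffDist G p τ τ' := by
  obtain ⟨N, ⟨hNdist, hNnest⟩, hNmax⟩ := Set.Finite.exists_maximal
    (s := {N : Set (GSep V) | (∀ q ∈ N, IsEffTangleDistinguisher G q) ∧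
      ∀ s ∈ N, ∀ t ∈ N, sepNested s t})
    (Set.toFinite _) ⟨∅, by simp, by simp⟩
  refine ⟨N, fun p hp => (hNdist p hp).isSep, hNnest, fun τ τ' hτ hτ' hne => by_contra fun hno => ?_⟩
  have hNτ : ∀ q ∈ N, ¬ sepEffDist G q τ τ' := fun q hq hq' => hno ⟨q, hq, hq'⟩
  obtain ⟨⟨k, hk⟩, ⟨k', hk'⟩⟩ := And.intro hτ.1 hτ'.1
  obtain ⟨p, hp, hpN⟩ := exists_sepEffDist_forall_sepNested hk hk'
    (hτ.exists_sepDistinguishes hτ' hne) hNdist hNnest hNτ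
  have hins : (∀ q ∈ insert p N, IsEffTangleDistinguisher G q) ∧
      ∀ s ∈ insert p N, ∀ t ∈ insert p N, sepNested s t := by
    simp only [Set.forall_mem_insert]
    exact ⟨⟨⟨τ, τ', k, k', hk, hk', hp⟩, hNdist⟩, ⟨sepNested_refl p, hpN⟩,
      fun s hs => ⟨sepNested_comm.mp (hpN s hs), hNnest s hs⟩⟩
  exact hNτ p (hNmax hins (Set.subset_insert p N) (Set.mem_insert p N)) hp
end

section
/- Let U be a universe of separations, S ⊆ U a structurally submodular separation system closed under the involution, and 𝒫 a set of profiles of S. Then S contains a nested set N that distinguishes 𝒫, i.e., for every two distinct profiles P, P' ∈ 𝒫 some separation in N has one orientation in P and the other in P'. -/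
/-!
Induct on the number of pairs of profiles, extending a given nested set `M`. Having found a
nested `N ⊇ M` distinguishing all pairs but `(P, P')`, pick among the separations that
distinguish `P, P'` and are nested with `M` one, `a`, crossing as few elements of `N` as
possible. If `a` crosses `t ∈ N`, where `t` distinguishes `Q, Q'`, structural submodularity
yields a corner `c` of `a` and `t` in `S` distinguishing `P, P'` or `Q, Q'` (the corner lemma).
By the fish lemma `c` is nested with everything nested with both `a` and `t`, and also with `t`,
so it crosses fewer elements of `N` than `a`; hence `c` distinguishes `Q, Q'`. Thus every other
pair has a distinguisher nested with `a` and with the elements of `N` nested with `a`, and a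
second application of the induction hypothesis, with these frozen, completes the step.
-/

variable {U : Type*}

/-- A `*`-closed set `S` is structurally submodular if for all `r, s ∈ S` at
least one of `r ⊔ s` and `r ⊓ s` lies in `S`. -/
def StructSubmodular [Lattice U] (S : Set U) : Prop :=
  ∀ r ∈ S, ∀ s ∈ S, r ⊔ s ∈ S ∨ r ⊓ s ∈ S

/-- `O` is an orientation of `S`: it contains, for each `s ∈ S`, exactly one
of `s` and `star s`. -/
def Orients [Lattice U] (star : U → U) (S O : Set U) : Prop :=
  O ⊆ S ∧ ∀ s ∈ S, (s ∈ O ∨ star s ∈ O) ∧ (s ∈ O → star s ∈ O → s = star s)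

/-- `O` is consistent: there are no `r, s ∈ O` with `star r < s`. -/
def Consistent [Lattice U] (star : U → U) (O : Set U) : Prop :=
  ∀ r ∈ O, ∀ s ∈ O, ¬ star r < s

/-- A profile of `S` is a consistent orientation `P` of `S` such that for all
`r, s ∈ P` we have `star r ⊓ star s ∉ P`. -/
def IsProfile [Lattice U] (star : U → U) (S P : Set U) : Prop :=
  Orients star S P ∧ Consistent star P ∧
    ∀ r ∈ P, ∀ s ∈ P, star r ⊓ star s ∉ P

/-- `s` distinguishes `P` and `P'`: one orientation of `s` lies in `P` and the
other in `P'`. -/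
def Distinguishes [Lattice U] (star : U → U) (s : U) (P P' : Set U) : Prop :=
  (s ∈ P ∧ star s ∈ P') ∨ (star s ∈ P ∧ s ∈ P')

namespace OrderReversingInvolution

variable [Lattice U] {star : U → U}

theorem star_star (h : OrderReversingInvolution star) (s : U) : star (star s) = s := h.1 s

theorem star_le_star_iff (h : OrderReversingInvolution star) {r s : U} :
    star s ≤ star r ↔ r ≤ s := (h.2 r s).symm

theorem le_star_comm_s4 (h : OrderReversingInvolution star) {r s : U} :
    r ≤ star s ↔ s ≤ star r := by
  rw [← h.star_le_star_iff, h.star_star]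

theorem star_le_comm_s4 (h : OrderReversingInvolution star) {r s : U} :
    star r ≤ s ↔ star s ≤ r := by
  rw [← h.star_le_star_iff, h.star_star]

theorem star_sup (h : OrderReversingInvolution star) (r s : U) :
    star (r ⊔ s) = star r ⊓ star s := by
  refine le_antisymm (le_inf ?_ ?_) (h.le_star_comm_s4.1 (sup_le ?_ ?_))
  exacts [h.star_le_star_iff.2 le_sup_left, h.star_le_star_iff.2 le_sup_right,
    h.le_star_comm_s4.1 inf_le_left, h.le_star_comm_s4.1 inf_le_right]

theorem star_inf (h : OrderReversingInvolution star) (r s : U) :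
    star (r ⊓ s) = star r ⊔ star s := by
  rw [← h.star_star (star r ⊔ star s), h.star_sup, h.star_star, h.star_star]

end OrderReversingInvolution

section Orientations

variable {star : U → U}

def orientations (star : U → U) (r : U) : Set U := {r, star r}

theorem self_mem_orientations (r : U) : r ∈ orientations star r := Set.mem_insert _ _

theorem star_mem_orientations (r : U) : star r ∈ orientations star r :=
  Set.mem_insert_of_mem _ rfl

theorem mem_of_mem_orientations {S : Set U} (hS : ∀ s ∈ S, star s ∈ S) {r x : U} (hr : r ∈ S)
    (hx : x ∈ orientations star r) : x ∈ S := by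
  rcases hx with rfl | rfl
  exacts [hr, hS r hr]

variable [Lattice U]

def corners (star : U → U) (r s : U) : Set U :=
  Set.image2 (· ⊔ ·) (orientations star r) (orientations star s)

theorem corners_comm (r s : U) : corners star r s = corners star s r :=
  Set.image2_comm fun _ _ => sup_comm _ _

theorem nested_of_mem_corners {r s c : U} (hc : c ∈ corners star r s) : Nested star r c := by
  obtain ⟨x, hx | hx, y, -, rfl⟩ := hc
  · exact Or.inl (hx ▸ le_sup_left)
  · exact Or.inr (Or.inr (Or.inl (hx ▸ le_sup_left)))

instance (star : U → U) : Std.Refl (Nested star) := ⟨fun _ => Or.inl le_rfl⟩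

end Orientations

namespace OrderReversingInvolution

variable [Lattice U] {star : U → U}

theorem orientations_eq_of_mem (h : OrderReversingInvolution star) {r x : U}
    (hx : x ∈ orientations star r) : orientations star x = orientations star r := by
  rcases hx with rfl | rfl
  · rfl
  · rw [orientations, orientations, h.star_star, Set.pair_comm]

theorem star_mem_of_mem_orientations (h : OrderReversingInvolution star) {r x : U}
    (hx : x ∈ orientations star r) : star x ∈ orientations star r :=
  h.orientations_eq_of_mem hx ▸ star_mem_orientations x

theorem corners_eq_of_mem_orientations (h : OrderReversingInvolution star) {r s x y : U}
    (hx : x ∈ orientations star r) (hy : y ∈ orientations star s) :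
    corners star x y = corners star r s := by
  rw [corners, corners, h.orientations_eq_of_mem hx, h.orientations_eq_of_mem hy]

theorem nested_symm (h : OrderReversingInvolution star) {r s : U} (hrs : Nested star r s) :
    Nested star s r := by
  rcases hrs with hrs | hrs | hrs | hrs
  · exact Or.inr (Or.inr (Or.inr (h.star_le_star_iff.2 hrs)))
  · exact Or.inr (Or.inl (h.le_star_comm_s4.1 hrs))
  · exact Or.inr (Or.inr (Or.inl (h.star_le_comm_s4.1 hrs)))
  · exact Or.inl (h.star_le_star_iff.1 hrs)

theorem nested_star_left (h : OrderReversingInvolution star) {r s : U} :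
    Nested star (star r) s ↔ Nested star r s := by
  unfold Nested; rw [h.star_star r]; tauto

theorem nested_star_right (h : OrderReversingInvolution star) {r s : U} :
    Nested star r (star s) ↔ Nested star r s := by
  unfold Nested; rw [h.star_star s]; tauto

theorem nested_iff_of_mem_orientations (h : OrderReversingInvolution star) {r s x y : U}
    (hx : x ∈ orientations star r) (hy : y ∈ orientations star s) :
    Nested star x y ↔ Nested star r s := by
  rcases hx with rfl | rfl <;> rcases hy with rfl | rfl <;>
    simp only [h.nested_star_left, h.nested_star_right]

theorem not_le_of_not_nested (h : OrderReversingInvolution star) {r s : U}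
    (hrs : ¬ Nested star r s) : ¬ s ≤ r :=
  fun hsr => hrs (Or.inr (Or.inr (Or.inr (h.star_le_star_iff.2 hsr))))

theorem nested_iff_comparable (h : OrderReversingInvolution star) {r s : U} :
    Nested star r s ↔ r ≤ s ∨ s ≤ star r ∨ star r ≤ s ∨ s ≤ r := by
  rw [Nested, h.le_star_comm_s4, h.star_le_star_iff]

/-- The fish lemma. -/
theorem nested_of_mem_corners_of_nested (h : OrderReversingInvolution star) {r s c t : U}
    (hrs : ¬ Nested star r s) (hc : c ∈ corners star r s) (htr : Nested star t r)
    (hts : Nested star t s) : Nested star t c := by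
  obtain ⟨x, hx, y, hy, rfl⟩ := hc
  have hcross : ∀ u, x ≤ u → y ≤ star u → False := fun u hxu hyu =>
    (h.nested_iff_of_mem_orientations hx hy).not.2 hrs
      (Or.inr (Or.inl (h.le_star_comm_s4.1 (hyu.trans (h.star_le_star_iff.2 hxu)))))
  rw [← h.nested_iff_of_mem_orientations (self_mem_orientations t) hx,
    h.nested_iff_comparable] at htr
  rw [← h.nested_iff_of_mem_orientations (self_mem_orientations t) hy,
    h.nested_iff_comparable] at hts
  rw [h.nested_iff_comparable]
  rcases htr with htx | htx | htx | htx
  · exact Or.inl (htx.trans le_sup_left)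
  · rcases hts with hty | hty | hty | hty
    · exact Or.inl (hty.trans le_sup_right)
    · exact Or.inr (Or.inl (sup_le htx hty))
    · exact Or.inr (Or.inr (Or.inl (hty.trans le_sup_right)))
    · exact (hcross _ htx (by rwa [h.star_star])).elim
  · exact Or.inr (Or.inr (Or.inl (htx.trans le_sup_left)))
  · rcases hts with hty | hty | hty | hty
    · exact Or.inl (hty.trans le_sup_right)
    · exact (hcross _ htx hty).elim
    · exact Or.inr (Or.inr (Or.inl (hty.trans le_sup_right)))
    · exact Or.inr (Or.inr (Or.inr (sup_le htx hty)))

end OrderReversingInvolution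

section Profiles

variable [Lattice U] {star : U → U} {S P P' Q Q' : Set U}

theorem StructSubmodular.sup_mem_or_star_sup_star_mem (hS : StructSubmodular S)
    (h : OrderReversingInvolution star) (hSstar : ∀ s ∈ S, star s ∈ S) {r s : U} (hr : r ∈ S)
    (hs : s ∈ S) : r ⊔ s ∈ S ∨ star r ⊔ star s ∈ S :=
  (hS r hr s hs).imp id fun hrs => h.star_inf r s ▸ hSstar _ hrs

theorem IsProfile.subset (hP : IsProfile star S P) : P ⊆ S := hP.1.1

theorem IsProfile.mem_or_star_mem (hP : IsProfile star S P) {s : U} (hs : s ∈ S) :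
    s ∈ P ∨ star s ∈ P :=
  (hP.1.2 s hs).1

theorem IsProfile.exists_mem_orientations (hP : IsProfile star S P) {s : U} (hs : s ∈ S) :
    ∃ x ∈ orientations star s, x ∈ P :=
  (hP.mem_or_star_mem hs).elim (⟨s, self_mem_orientations s, ·⟩)
    (⟨star s, star_mem_orientations s, ·⟩)

theorem IsProfile.exists_distinguishes (hP : IsProfile star S P) (hP' : IsProfile star S P')
    (hne : P ≠ P') : ∃ s ∈ S, Distinguishes star s P P' := by
  obtain ⟨x, hx⟩ : ∃ x, ¬ (x ∈ P ↔ x ∈ P') := by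
    by_contra! hPP'
    exact hne (Set.ext hPP')
  by_cases hxP : x ∈ P
  · have hxP' : x ∉ P' := fun hxP' => hx (iff_of_true hxP hxP')
    exact ⟨x, hP.subset hxP,
      Or.inl ⟨hxP, (hP'.mem_or_star_mem (hP.subset hxP)).resolve_left hxP'⟩⟩
  · have hxP' : x ∈ P' := by tauto
    exact ⟨x, hP'.subset hxP',
      Or.inr ⟨(hP.mem_or_star_mem (hP'.subset hxP')).resolve_left hxP, hxP'⟩⟩

theorem Distinguishes.symm {s : U} (hs : Distinguishes star s P P') :
    Distinguishes star s P' P :=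
  (Or.symm hs).imp And.symm And.symm

theorem Distinguishes.exists_orientation {s : U} (hs : Distinguishes star s P P')
    (h : OrderReversingInvolution star) : ∃ x ∈ orientations star s, x ∈ P ∧ star x ∈ P' := by
  rcases hs with ⟨hsP, hsP'⟩ | ⟨hsP, hsP'⟩
  · exact ⟨s, self_mem_orientations s, hsP, hsP'⟩
  · exact ⟨star s, star_mem_orientations s, hsP, by rwa [h.star_star]⟩

theorem Distinguishes.of_mem_orientations {s : U} (hs : Distinguishes star s P P')
    (h : OrderReversingInvolution star) {x : U} (hx : x ∈ orientations star s) :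
    Distinguishes star x P P' := by
  rcases hx with rfl | rfl
  · exact hs
  · rw [Distinguishes, h.star_star]
    exact Or.symm hs

theorem IsProfile.distinguishes_sup (hP : IsProfile star S P) (hP' : IsProfile star S P')
    (h : OrderReversingInvolution star) {x y : U} (hx : x ∈ P) (hx' : star x ∈ P') (hy : y ∈ P)
    (hyx : ¬ y ≤ x) (hxy : x ⊔ y ∈ S) : Distinguishes star (x ⊔ y) P P' := by
  refine Or.inl ⟨(hP.mem_or_star_mem hxy).resolve_right fun hxyP => ?_,
    (hP'.mem_or_star_mem hxy).resolve_left fun hxyP' => ?_⟩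
  · exact hP.2.2 x hx y hy (h.star_sup x y ▸ hxyP)
  · exact hP'.2.1 (star x) hx' _ hxyP' (by rw [h.star_star]; exact left_lt_sup.2 hyx)

theorem Distinguishes.sup_of_mem_of_mem {u : U} (hu : Distinguishes star u P P')
    (hP : IsProfile star S P) (hP' : IsProfile star S P') (h : OrderReversingInvolution star)
    {y : U} (hy : y ∈ P) (hy' : y ∈ P') (hyu : ¬ y ≤ u) (huy : u ⊔ y ∈ S) :
    Distinguishes star (u ⊔ y) P P' := by
  rcases hu with ⟨hu, hu'⟩ | ⟨hu', hu⟩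
  · exact hP.distinguishes_sup hP' h hu hu' hy hyu huy
  · exact (hP'.distinguishes_sup hP h hu hu' hy' hyu huy).symm

theorem exists_mem_corners_distinguishes_of_mem (h : OrderReversingInvolution star)
    (hSstar : ∀ s ∈ S, star s ∈ S) (hSsub : StructSubmodular S) (hP : IsProfile star S P)
    (hP' : IsProfile star S P') {x y : U} (hxS : x ∈ S) (hyS : y ∈ S) (hxy : ¬ Nested star x y)
    (hx : x ∈ P) (hx' : star x ∈ P') (hy : y ∈ P) (hy' : star y ∈ P') :
    ∃ c ∈ S ∩ corners star x y, Distinguishes star c P P' := by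
  rcases hSsub.sup_mem_or_star_sup_star_mem h hSstar hxS hyS with hc | hc
  · exact ⟨_, ⟨hc, Set.mem_image2_of_mem (self_mem_orientations x) (self_mem_orientations y)⟩,
      hP.distinguishes_sup hP' h hx hx' hy (h.not_le_of_not_nested hxy) hc⟩
  · refine ⟨_, ⟨hc, Set.mem_image2_of_mem (star_mem_orientations x) (star_mem_orientations y)⟩,
      (hP'.distinguishes_sup hP h hx' (by rwa [h.star_star]) hy' ?_ hc).symm⟩
    exact fun hyx => hxy (Or.inl (h.star_le_star_iff.1 hyx))

/-- The corner lemma. -/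
theorem exists_mem_corners_distinguishes (h : OrderReversingInvolution star)
    (hSstar : ∀ s ∈ S, star s ∈ S) (hSsub : StructSubmodular S) (hP : IsProfile star S P)
    (hP' : IsProfile star S P') (hQ : IsProfile star S Q) (hQ' : IsProfile star S Q') {a t : U}
    (ha : a ∈ S) (ht : t ∈ S) (hat : ¬ Nested star a t) (haP : Distinguishes star a P P')
    (htQ : Distinguishes star t Q Q') :
    ∃ c ∈ S ∩ corners star a t, Distinguishes star c P P' ∨ Distinguishes star c Q Q' := by
  have hta : ¬ Nested star t a := mt h.nested_symm hat
  obtain ⟨y, hyt, hyP⟩ := hP.exists_mem_orientations ht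
  obtain ⟨z, hza, hzQ⟩ := hQ.exists_mem_orientations ha
  have hyS := mem_of_mem_orientations hSstar ht hyt
  have hzS := mem_of_mem_orientations hSstar ha hza
  rcases hP'.mem_or_star_mem hyS with hyP' | hsyP'
  · rcases hQ'.mem_or_star_mem hzS with hzQ' | hszQ'
    · -- `y ∈ P ∩ P'` and `z ∈ Q ∩ Q'`: of the opposite corners `z* ⊔ y` and `z ⊔ y*`, one lies
      -- in `S`; the first distinguishes `P, P'`, the second `Q, Q'`
      have hz' := h.star_mem_of_mem_orientations hza
      have hy' := h.star_mem_of_mem_orientations hyt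
      rcases hSsub.sup_mem_or_star_sup_star_mem h hSstar (hSstar z hzS) hyS with hc | hc
      · refine ⟨_, ⟨hc, Set.mem_image2_of_mem hz' hyt⟩, Or.inl ?_⟩
        exact (haP.of_mem_orientations h hz').sup_of_mem_of_mem hP hP' h hyP hyP'
          (h.not_le_of_not_nested (mt (h.nested_iff_of_mem_orientations hz' hyt).1 hat)) hc
      · rw [h.star_star] at hc
        refine ⟨_, ⟨hc, Set.mem_image2_of_mem hza hy'⟩, Or.inr ?_⟩
        rw [sup_comm] at hc ⊢
        exact (htQ.of_mem_orientations h hy').sup_of_mem_of_mem hQ hQ' h hzQ hzQ'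
          (h.not_le_of_not_nested (mt (h.nested_iff_of_mem_orientations hy' hza).1 hta)) hc
    · obtain ⟨w, hwt, hwQ, hwQ'⟩ := htQ.exists_orientation h
      obtain ⟨c, hc, hcQ⟩ := exists_mem_corners_distinguishes_of_mem h hSstar hSsub hQ hQ'
        (mem_of_mem_orientations hSstar ht hwt) hzS
        (mt (h.nested_iff_of_mem_orientations hwt hza).1 hta) hwQ hwQ' hzQ hszQ'
      rw [h.corners_eq_of_mem_orientations hwt hza, corners_comm] at hc
      exact ⟨c, hc, Or.inr hcQ⟩
  · obtain ⟨x, hxa, hxP, hxP'⟩ := haP.exists_orientation h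
    obtain ⟨c, hc, hcP⟩ := exists_mem_corners_distinguishes_of_mem h hSstar hSsub hP hP'
      (mem_of_mem_orientations hSstar ha hxa) hyS
      (mt (h.nested_iff_of_mem_orientations hxa hyt).1 hat) hxP hxP' hyP hsyP'
    rw [h.corners_eq_of_mem_orientations hxa hyt] at hc
    exact ⟨c, hc, Or.inl hcP⟩

end Profiles

section CornerProperty

variable {ι : Type*} {R : U → U → Prop} {D : ι → Set U}

/-- In the application `R` is nestedness, `D i` is the set of separations distinguishing the
`i`-th pair of profiles, and `c` is a corner of `a` and `t`; the last clause is the fish lemma. -/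
def HasCornerProperty (R : U → U → Prop) (D : ι → Set U) : Prop :=
  ∀ i j, ∀ a ∈ D i, ∀ t ∈ D j, ¬ R a t →
    ∃ c ∈ D i ∪ D j, R c a ∧ R c t ∧ ∀ x, R x a → R x t → R x c

variable [Std.Refl R] [Std.Symm R]

theorem HasCornerProperty.exists_compatible_superset [Finite U] (hD : HasCornerProperty R D)
    {M N : Set U} (hMN : M ⊆ N) (hN : N.Pairwise R) {ρ : ι}
    (hρ : ∃ d ∈ D ρ, ∀ m ∈ M, R d m) :
    ∃ M', M ⊆ M' ∧ M'.Pairwise R ∧ (M' ∩ D ρ).Nonempty ∧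
      ∀ i, (N ∩ D i).Nonempty → ∃ d ∈ D i, ∀ m ∈ M', R d m := by
  obtain ⟨a, ⟨haρ, haM⟩, hamin⟩ := Set.exists_min_image {d ∈ D ρ | ∀ m ∈ M, R d m}
    (fun d => {x ∈ N | ¬ R d x}.ncard) (Set.toFinite _) hρ
  refine ⟨insert a {x ∈ N | R a x}, fun m hm => Or.inr ⟨hMN hm, haM m hm⟩,
    (hN.mono (Set.sep_subset _ _)).insert_of_symm fun x hx _ => hx.2,
    ⟨a, Set.mem_insert _ _, haρ⟩, ?_⟩
  rintro i ⟨t, htN, hti⟩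
  by_cases hat : R a t
  · refine ⟨t, hti, ?_⟩
    rintro m (rfl | ⟨hmN, -⟩)
    exacts [symm hat, hN.of_refl htN hmN]
  obtain ⟨c, hc, hca, hct, hfish⟩ := hD ρ i a haρ t hti hat
  have hcN : ∀ x ∈ N, R a x → R c x := fun x hx hax =>
    symm (hfish x (symm hax) (hN.of_refl hx htN))
  refine ⟨c, hc.resolve_left fun hcρ => ?_, ?_⟩
  · -- `c` would be a candidate for `ρ` crossing fewer elements of `N` than `a`
    have hfewer : {x ∈ N | ¬ R c x} ⊂ {x ∈ N | ¬ R a x} := by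
      refine (Set.ssubset_iff_of_subset ?_).2 ⟨t, ⟨htN, hat⟩, fun ht => ht.2 hct⟩
      exact fun x hx => ⟨hx.1, fun hax => hx.2 (hcN x hx.1 hax)⟩
    exact (Set.ncard_lt_ncard hfewer).not_ge
      (hamin c ⟨hcρ, fun m hm => hcN m (hMN hm) (haM m hm)⟩)
  · rintro m (rfl | ⟨hmN, ham⟩)
    exacts [hca, hcN m hmN ham]

theorem HasCornerProperty.exists_pairwise_superset [Finite U] (hD : HasCornerProperty R D)
    (J : Finset ι) (M : Set U) (hM : M.Pairwise R) (hJ : ∀ i ∈ J, ∃ d ∈ D i, ∀ m ∈ M, R d m) :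
    ∃ N, M ⊆ N ∧ N.Pairwise R ∧ ∀ i ∈ J, (N ∩ D i).Nonempty := by
  classical
  induction J using Finset.induction_on generalizing M with
  | empty => exact ⟨M, subset_rfl, hM, by simp⟩
  | insert ρ J _ ih =>
    obtain ⟨N₀, hMN₀, hN₀, hN₀J⟩ := ih M hM fun i hi => hJ i (Finset.mem_insert_of_mem hi)
    obtain ⟨M', hMM', hM', hM'ρ, hM'J⟩ :=
      hD.exists_compatible_superset hMN₀ hN₀ (hJ ρ (Finset.mem_insert_self ρ J))
    obtain ⟨N, hM'N, hN, hNJ⟩ := ih M' hM' fun i hi => hM'J i (hN₀J i hi)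
    exact ⟨N, hMM'.trans hM'N, hN, Finset.forall_mem_insert _ _ _ |>.2
      ⟨hM'ρ.mono (Set.inter_subset_inter_left _ hM'N), hNJ⟩⟩

end CornerProperty

theorem hasCornerProperty_distinguishers [Lattice U] {star : U → U}
    (h : OrderReversingInvolution star) {S : Set U} (hSstar : ∀ s ∈ S, star s ∈ S)
    (hSsub : StructSubmodular S) {Ps : Set (Set U)} (hPs : ∀ P ∈ Ps, IsProfile star S P) :
    HasCornerProperty (Nested star) fun π : Ps × Ps => {s ∈ S | Distinguishes star s π.1 π.2} := by
  rintro ⟨P, P'⟩ ⟨Q, Q'⟩ a ⟨ha, haP⟩ t ⟨ht, htQ⟩ hat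
  obtain ⟨c, ⟨hcS, hc⟩, hcD⟩ := exists_mem_corners_distinguishes h hSstar hSsub (hPs _ P.2)
    (hPs _ P'.2) (hPs _ Q.2) (hPs _ Q'.2) ha ht hat haP htQ
  refine ⟨c, hcD.imp (⟨hcS, ·⟩) (⟨hcS, ·⟩), h.nested_symm (nested_of_mem_corners hc),
    h.nested_symm (nested_of_mem_corners (corners_comm (star := star) a t ▸ hc)),
    fun x hxa hxt => h.nested_of_mem_corners_of_nested hat hc hxa hxt⟩

/-- **Tree-of-tangles theorem for structurally submodular separation
systems.** -/
theorem tree_of_tangles_structurally_submodular [Lattice U] [Fintype U]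
    (star : U → U) (hstar : OrderReversingInvolution star)
    (S : Set U) (hSclosed : ∀ s ∈ S, star s ∈ S) (hSsub : StructSubmodular S)
    (Ps : Set (Set U)) (hPs : ∀ P ∈ Ps, IsProfile star S P) :
    ∃ N ⊆ S, (∀ a ∈ N, ∀ b ∈ N, Nested star a b) ∧
      ∀ P ∈ Ps, ∀ P' ∈ Ps, P ≠ P' → ∃ s ∈ N, Distinguishes star s P P' := by
  classical
  have : Std.Symm (Nested star) := ⟨fun _ _ => hstar.nested_symm⟩
  have hdist : ∀ π ∈ Finset.univ.filter fun π : Ps × Ps => π.1 ≠ π.2,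
      ∃ s ∈ {s ∈ S | Distinguishes star s π.1 π.2}, ∀ m ∈ (∅ : Set U), Nested star s m := by
    intro π hπ
    obtain ⟨s, hsS, hsD⟩ := (hPs _ π.1.2).exists_distinguishes (hPs _ π.2.2)
      (Subtype.coe_injective.ne (Finset.mem_filter.1 hπ).2)
    exact ⟨s, ⟨hsS, hsD⟩, by simp⟩
  obtain ⟨N, -, hN, hND⟩ := (hasCornerProperty_distinguishers hstar hSclosed hSsub hPs)
    |>.exists_pairwise_superset _ ∅ (Set.pairwise_empty _) hdist
  refine ⟨N ∩ S, Set.inter_subset_right, fun a ha b hb => hN.of_refl ha.1 hb.1, ?_⟩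
  intro P hP P' hP' hne
  obtain ⟨s, hsN, hsS, hsD⟩ := hND (⟨P, hP⟩, ⟨P', hP'⟩) (by simpa using hne)
  exact ⟨s, ⟨hsN, hsS⟩, hsD⟩
end

section
/- Let U be a universe of separations, S ⊆ U a structurally submodular separation system closed under the involution, and 𝒫 a set of profiles of S. For distinct P, P' ∈ 𝒫 let A_{P,P'} = {s ∈ S : s distinguishes P and P'}. Then the family (A_{P,P'} | P ≠ P' ∈ 𝒫) splinters. -/
/-!
Let `a` distinguish `P, P'` but not `Q, Q'`, and `b` conversely, with `a` and `b` crossing.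
After reorienting `a` and `b` and swapping `P, P'` and `Q, Q'`, we may assume `a ∈ P`,
`a* ∈ P'`, `a ∈ Q'`, and `b ∈ Q`, `b* ∈ Q'`, `b ∈ P'`. By submodularity `a ⊔ b*` or
`a ⊓ b* = (a* ⊔ b)*` lies in `S`. In the first case `a ⊔ b*` lies in the profile `Q'`,
which contains `a` and `b*`, while its inverse `a* ⊓ b` lies in `Q` by consistency, since
`a* ⊓ b < b` when `a` and `b` cross; so `a ⊔ b*` distinguishes `Q` and `Q'`. Symmetrically,
in the second case `a* ⊔ b` distinguishes `P` and `P'`.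
-/

variable {U : Type*}

section Separations

variable [Lattice U] {star : U → U}

def OrderReversingInvolution.toOrderIsoDual (h : OrderReversingInvolution star) :
    U ≃o Uᵒᵈ where
  toFun x := OrderDual.toDual (star x)
  invFun x := star (OrderDual.ofDual x)
  left_inv := h.1
  right_inv := h.1
  map_rel_iff' := (h.2 _ _).symm

lemma OrderReversingInvolution.star_sup_s5 (h : OrderReversingInvolution star) (x y : U) :
    star (x ⊔ y) = star x ⊓ star y :=
  h.toOrderIsoDual.map_sup x y

lemma OrderReversingInvolution.star_inf_s5 (h : OrderReversingInvolution star) (x y : U) :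
    star (x ⊓ y) = star x ⊔ star y :=
  h.toOrderIsoDual.map_inf x y

lemma distinguishes_comm {s : U} {P P' : Set U} :
    Distinguishes star s P P' ↔ Distinguishes star s P' P := by
  unfold Distinguishes
  tauto

lemma distinguishes_star (hinv : Function.Involutive star) {s : U} {P P' : Set U} :
    Distinguishes star (star s) P P' ↔ Distinguishes star s P P' := by
  unfold Distinguishes
  rw [hinv s]
  tauto

lemma crosses_star_left (hinv : Function.Involutive star) {r s : U} :
    Crosses star (star r) s ↔ Crosses star r s := by
  simp only [Crosses, Nested, hinv r]
  tauto

lemma crosses_star_right (hinv : Function.Involutive star) {r s : U} :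
    Crosses star r (star s) ↔ Crosses star r s := by
  simp only [Crosses, Nested, hinv s]
  tauto

lemma isCornerSep_star_left (hinv : Function.Involutive star) {c r s : U} :
    IsCornerSep star c (star r) s ↔ IsCornerSep star c r s := by
  simp only [IsCornerSep, hinv r, or_comm]

lemma isCornerSep_star_right (hinv : Function.Involutive star) {c r s : U} :
    IsCornerSep star c r (star s) ↔ IsCornerSep star c r s := by
  simp only [IsCornerSep, hinv s, or_comm]

lemma Orients.agree_of_not_distinguishes {S O O' : Set U} (hO : Orients star S O)
    (hO' : Orients star S O') {s : U} (hs : s ∈ S) (h : ¬ Distinguishes star s O O') :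
    s ∈ O ∧ s ∈ O' ∨ star s ∈ O ∧ star s ∈ O' := by
  have := (hO.2 s hs).1
  have := (hO'.2 s hs).1
  unfold Distinguishes at h
  tauto

lemma Orients.star_mem_of_star_lt {S O : Set U} (hO : Orients star S O)
    (hC : Consistent star O) {s t : U} (hs : s ∈ O) (ht : t ∈ S) (hlt : star t < s) :
    star t ∈ O :=
  (hO.2 t ht).1.resolve_left fun htO => hC t htO s hs hlt

lemma IsProfile.sup_mem (hstar : OrderReversingInvolution star) {S P : Set U}
    (hP : IsProfile star S P) {x y : U} (hx : x ∈ P) (hy : y ∈ P) (hxy : x ⊔ y ∈ S) :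
    x ⊔ y ∈ P := by
  refine (hP.1.2 _ hxy).1.resolve_right fun h => hP.2.2 x hx y hy ?_
  rwa [← hstar.star_sup_s5]

lemma sup_star_distinguishes (hstar : OrderReversingInvolution star) {S P Q : Set U}
    (hP : IsProfile star S P) (hQ : IsProfile star S Q) {a b : U} (hS : a ⊔ star b ∈ S)
    (hba : ¬ b ≤ star a) (hbP : b ∈ P) (haQ : a ∈ Q) (hbQ : star b ∈ Q) :
    Distinguishes star (a ⊔ star b) P Q := by
  have hlt : star (a ⊔ star b) < b := by
    rw [hstar.star_sup_s5, hstar.1 b]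
    exact inf_le_right.lt_of_ne fun h => hba (inf_eq_right.mp h)
  exact Or.inr ⟨hP.1.star_mem_of_star_lt hP.2.1 hbP hS hlt, hQ.sup_mem hstar haQ hbQ hS⟩

lemma exists_corner_distinguishes_of_orientations (hstar : OrderReversingInvolution star)
    {S : Set U} (hSclosed : ∀ s ∈ S, star s ∈ S) (hSsub : StructSubmodular S)
    {P P' Q Q' : Set U} (hP : IsProfile star S P) (hP' : IsProfile star S P')
    (hQ : IsProfile star S Q) (hQ' : IsProfile star S Q') {a b : U} (haS : a ∈ S)
    (hbS : b ∈ S) (hab : Crosses star a b) (haP : a ∈ P) (haP' : star a ∈ P')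
    (haQ' : a ∈ Q') (hbQ : b ∈ Q) (hbQ' : star b ∈ Q') (hbP' : b ∈ P') :
    ∃ c, IsCornerSep star c a b ∧ c ∈ S ∧
      (Distinguishes star c P P' ∨ Distinguishes star c Q Q') := by
  have hab' : ¬ a ≤ star b := fun h => hab (Or.inr (Or.inl h))
  have hba : ¬ b ≤ star a := fun h => hab' (by simpa only [hstar.1 a] using (hstar.2 _ _).1 h)
  rcases hSsub a haS (star b) (hSclosed b hbS) with hS | hS
  · exact ⟨a ⊔ star b, ⟨a, star b, .inl rfl, .inr rfl, .inl rfl⟩, hS,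
      .inr (sup_star_distinguishes hstar hQ hQ' hS hba hbQ haQ' hbQ')⟩
  · have hS' : b ⊔ star a ∈ S := by
      simpa only [hstar.star_inf_s5, hstar.1 b, sup_comm] using hSclosed _ hS
    exact ⟨b ⊔ star a, ⟨star a, b, .inr rfl, .inl rfl, .inl (sup_comm _ _)⟩, hS',
      .inl (sup_star_distinguishes hstar hP hP' hS' hab' haP hbP' haP')⟩

lemma exists_corner_distinguishes (hstar : OrderReversingInvolution star) {S : Set U}
    (hSclosed : ∀ s ∈ S, star s ∈ S) (hSsub : StructSubmodular S) {P P' Q Q' : Set U}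
    (hP : IsProfile star S P) (hP' : IsProfile star S P') (hQ : IsProfile star S Q)
    (hQ' : IsProfile star S Q') {a b : U} (haS : a ∈ S) (hbS : b ∈ S)
    (haP : Distinguishes star a P P') (haQ : ¬ Distinguishes star a Q Q')
    (hbQ : Distinguishes star b Q Q') (hbP : ¬ Distinguishes star b P P')
    (hab : Crosses star a b) :
    ∃ c, IsCornerSep star c a b ∧ c ∈ S ∧
      (Distinguishes star c P P' ∨ Distinguishes star c Q Q') := by
  have hinv : Function.Involutive star := hstar.1
  wlog haQQ' : a ∈ Q ∧ a ∈ Q' generalizing a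
  · obtain ⟨c, hc, hcS, hcd⟩ := this (a := star a) (hSclosed a haS)
      ((distinguishes_star hinv).2 haP) (mt (distinguishes_star hinv).1 haQ)
      ((crosses_star_left hinv).2 hab)
      ((hQ.1.agree_of_not_distinguishes hQ'.1 haS haQ).resolve_left haQQ')
    exact ⟨c, (isCornerSep_star_left hinv).1 hc, hcS, hcd⟩
  wlog hbPP' : b ∈ P ∧ b ∈ P' generalizing b
  · obtain ⟨c, hc, hcS, hcd⟩ := this (b := star b) (hSclosed b hbS)
      ((distinguishes_star hinv).2 hbQ) (mt (distinguishes_star hinv).1 hbP)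
      ((crosses_star_right hinv).2 hab)
      ((hP.1.agree_of_not_distinguishes hP'.1 hbS hbP).resolve_left hbPP')
    exact ⟨c, (isCornerSep_star_right hinv).1 hc, hcS, hcd⟩
  wlog haPP' : a ∈ P ∧ star a ∈ P' generalizing P P'
  · obtain ⟨c, hc, hcS, hcd⟩ := this hP' hP (haP := distinguishes_comm.1 haP)
      (hbP := mt distinguishes_comm.2 hbP) (hbPP' := hbPP'.symm) (haP.resolve_left haPP').symm
    exact ⟨c, hc, hcS, hcd.imp_left distinguishes_comm.1⟩
  wlog hbQQ' : b ∈ Q ∧ star b ∈ Q' generalizing Q Q'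
  · obtain ⟨c, hc, hcS, hcd⟩ := this hQ' hQ (haQ := mt distinguishes_comm.2 haQ)
      (hbQ := distinguishes_comm.1 hbQ) (haQQ' := haQQ'.symm) (hbQ.resolve_left hbQQ').symm
    exact ⟨c, hc, hcS, hcd.imp_right distinguishes_comm.1⟩
  exact exists_corner_distinguishes_of_orientations hstar hSclosed hSsub hP hP' hQ hQ' haS hbS
    hab haPP'.1 haPP'.2 haQQ'.2 hbQQ'.1 hbQQ'.2 hbPP'.2

end Separations

theorem profile_distinguishers_splinter_general [Lattice U]
    (star : U → U) (hstar : OrderReversingInvolution star)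
    (S : Set U) (hSclosed : ∀ s ∈ S, star s ∈ S) (hSsub : StructSubmodular S)
    (Ps : Set (Set U)) (hPs : ∀ P ∈ Ps, IsProfile star S P) :
    Splinters star
      (fun pp : {pp : Set U × Set U // pp.1 ∈ Ps ∧ pp.2 ∈ Ps ∧ pp.1 ≠ pp.2} =>
        {s | s ∈ S ∧ Distinguishes star s pp.1.1 pp.1.2}) := by
  rintro ⟨⟨P, P'⟩, hP, hP', _⟩ ⟨⟨Q, Q'⟩, hQ, hQ', _⟩ a ⟨haS, haP⟩ haQ b ⟨hbS, hbQ⟩ hbP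
    hab
  obtain ⟨c, hc, hcS, hcd⟩ := exists_corner_distinguishes hstar hSclosed hSsub (hPs P hP)
    (hPs P' hP') (hPs Q hQ) (hPs Q' hQ') haS hbS haP (fun h => haQ ⟨haS, h⟩) hbQ
    (fun h => hbP ⟨hbS, h⟩) hab
  exact ⟨c, hc, hcd.imp (⟨hcS, ·⟩) (⟨hcS, ·⟩)⟩

/-- The family `(A_{P,P'} | P ≠ P' ∈ Ps)` of sets of separations in `S`
distinguishing two distinct profiles of `Ps` splinters. -/
theorem profile_distinguishers_splinter [Lattice U] [Fintype U]
    (star : U → U) (hstar : OrderReversingInvolution star)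
    (S : Set U) (hSclosed : ∀ s ∈ S, star s ∈ S) (hSsub : StructSubmodular S)
    (Ps : Set (Set U)) (hPs : ∀ P ∈ Ps, IsProfile star S P) :
    Splinters star
      (fun pp : {pp : Set U × Set U // pp.1 ∈ Ps ∧ pp.2 ∈ Ps ∧ pp.1 ≠ pp.2} =>
        {s | s ∈ S ∧ Distinguishes star s pp.1.1 pp.1.2}) :=
  profile_distinguishers_splinter_general star hstar S hSclosed hSsub Ps hPs
end
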